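/- Let θ be an inner function, h ∈ L∞(ℝ), and G = [[conj(θ), 0], [h, θ]]. Then a function φ₁₊ ∈ H₂⁺ lies in the kernel of the truncated Toeplitz operator A_h^θ on K_θ if and only if there exists φ₂₊ ∈ H₂⁺ such that (φ₁₊, φ₂₊) ∈ ker T_G. In particular ker A_h^θ = {0} iff ker T_G = {0}. -/

import Mathlib

/-! Since `|θ| = 1` a.e., `φ₁ = θ g` with `g ∈ H₂⁻` says exactly that `conj θ · φ₁ ∈ H₂⁻`, the first
row of `T_G φ`; and `h φ₁ = θ u + v` with `u ∈ H₂⁺`, `v ∈ H₂⁻` says that `h φ₁ + θ φ₂ ∈ H₂⁻` for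
`φ₂ = -u`, the second row. -/

open MeasureTheory Complex Filter Set Matrix

noncomputable section
open scoped Classical

/-- The open upper half-plane. -/
def UHP : Set ℂ := {z : ℂ | 0 < z.im}

/-- The open lower half-plane. -/
def LHP : Set ℂ := {z : ℂ | z.im < 0}

/-- The Hardy space `H₂⁺` of the upper half-plane, viewed as boundary functions on `ℝ`:
square-integrable functions that arise as a.e. vertical boundary limits of a holomorphic
function on `ℂ⁺` with uniformly bounded `L²`-means on horizontal lines. -/
def H2p : Set (ℝ → ℂ) :=
  {f | MemLp f 2 (volume : Measure ℝ) ∧ ∃ F : ℂ → ℂ,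
    DifferentiableOn ℂ F UHP ∧
    (∃ C : ℝ, ∀ y : ℝ, 0 < y → ∫ x : ℝ, ‖F (x + y * Complex.I)‖ ^ 2 ≤ C) ∧
    (∀ᵐ x : ℝ ∂volume, Tendsto (fun y : ℝ => F (x + y * Complex.I))
      (nhdsWithin 0 (Ioi 0)) (nhds (f x)))}

/-- The Hardy space `H₂⁻` of the lower half-plane, as boundary functions on `ℝ`. -/
def H2m : Set (ℝ → ℂ) :=
  {f | MemLp f 2 (volume : Measure ℝ) ∧ ∃ F : ℂ → ℂ,
    DifferentiableOn ℂ F LHP ∧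
    (∃ C : ℝ, ∀ y : ℝ, y < 0 → ∫ x : ℝ, ‖F (x + y * Complex.I)‖ ^ 2 ≤ C) ∧
    (∀ᵐ x : ℝ ∂volume, Tendsto (fun y : ℝ => F (x + y * Complex.I))
      (nhdsWithin 0 (Iio 0)) (nhds (f x)))}

/-- `H∞⁺`: boundary functions of bounded holomorphic functions on the upper half-plane. -/
def HinfP : Set (ℝ → ℂ) :=
  {f | ∃ F : ℂ → ℂ, DifferentiableOn ℂ F UHP ∧
    (∃ C : ℝ, ∀ z ∈ UHP, ‖F z‖ ≤ C) ∧
    (∀ᵐ x : ℝ ∂volume, Tendsto (fun y : ℝ => F (x + y * Complex.I))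
      (nhdsWithin 0 (Ioi 0)) (nhds (f x)))}

/-- `H∞⁻`: boundary functions of bounded holomorphic functions on the lower half-plane. -/
def HinfM : Set (ℝ → ℂ) :=
  {f | ∃ F : ℂ → ℂ, DifferentiableOn ℂ F LHP ∧
    (∃ C : ℝ, ∀ z ∈ LHP, ‖F z‖ ≤ C) ∧
    (∀ᵐ x : ℝ ∂volume, Tendsto (fun y : ℝ => F (x + y * Complex.I))
      (nhdsWithin 0 (Iio 0)) (nhds (f x)))}

/-- An inner function: an `H∞⁺` function of unit modulus a.e. on `ℝ`. -/
def IsInner (θ : ℝ → ℂ) : Prop := θ ∈ HinfP ∧ ∀ᵐ x : ℝ ∂volume, ‖θ x‖ = 1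

/-- `a` divides `b` in `H∞⁺` (for inner functions: `a ⪯ b`). -/
def InnerDiv (a b : ℝ → ℂ) : Prop := ∃ c ∈ HinfP, ∀ᵐ x : ℝ ∂volume, b x = a x * c x

/-- The model space `K_θ = H₂⁺ ∩ θ H₂⁻`. -/
def Kmodel (θ : ℝ → ℂ) : Set (ℝ → ℂ) :=
  {f | f ∈ H2p ∧ ∃ g ∈ H2m, ∀ᵐ x : ℝ ∂volume, f x = θ x * g x}

/-- The kernel of the Toeplitz operator with `2 × 2` symbol `G`: those `φ ∈ (H₂⁺)²`
with `Gφ ∈ (L₂)²` and `P⁺(Gφ) = 0`, i.e. `Gφ ∈ (H₂⁻)²`. -/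
def kerT2 (G : Matrix (Fin 2) (Fin 2) (ℝ → ℂ)) : Set (Fin 2 → ℝ → ℂ) :=
  {φ | (∀ i, φ i ∈ H2p) ∧ ∀ i, (fun x => ∑ j : Fin 2, G i j x * φ j x) ∈ H2m}

/-- The kernel of the Toeplitz operator with scalar symbol `g`: those `φ ∈ H₂⁺`
with `g·φ ∈ H₂⁻`. -/
def kerTs (g : ℝ → ℂ) : Set (ℝ → ℂ) :=
  {f | f ∈ H2p ∧ ∃ v ∈ H2m, ∀ᵐ x : ℝ ∂volume, g x * f x = v x}

/-- An outer function in `H∞⁺`, characterized by `O·H₂⁺` being dense in `H₂⁺`. -/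
def IsOuter (O : ℝ → ℂ) : Prop :=
  O ∈ HinfP ∧ ∀ g ∈ H2p, ∀ ε : ℝ, 0 < ε → ∃ f ∈ H2p,
    eLpNorm (fun x => O x * f x - g x) 2 (volume : Measure ℝ) < ENNReal.ofReal ε

/-- The kernel of the truncated Toeplitz operator `A_h^θ` on the model space `K_θ`:
`φ ∈ K_θ` with `P_θ(hφ) = 0`, i.e. `hφ ∈ θH₂⁺ ⊕ H₂⁻`. -/
def kerTTO (h θ : ℝ → ℂ) : Set (ℝ → ℂ) :=
  {φ | φ ∈ Kmodel θ ∧ ∃ u ∈ H2p, ∃ v ∈ H2m,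
    ∀ᵐ x : ℝ ∂volume, h x * φ x = θ x * u x + v x}

/-- A finite Blaschke product (for the upper half-plane) of degree `n`. -/
def IsFBPdeg (θ : ℝ → ℂ) (n : ℕ) : Prop :=
  ∃ (c : ℂ) (a : Fin n → ℂ), ‖c‖ = 1 ∧ (∀ k, 0 < (a k).im) ∧
    ∀ᵐ x : ℝ ∂volume,
      θ x = c * ∏ k : Fin n, ((x : ℂ) - a k) / ((x : ℂ) - starRingEnd ℂ (a k))

/-- A finite Blaschke product of some degree. -/
def IsFBP (θ : ℝ → ℂ) : Prop := ∃ n : ℕ, IsFBPdeg θ n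

/-- The function `r(ξ) = (ξ - i)/(ξ + i)`. -/
def rfun : ℝ → ℂ := fun x => ((x : ℂ) - Complex.I) / ((x : ℂ) + Complex.I)

/-- The singular inner function `ξ ↦ e^{iμξ}`. -/
def efun (μ : ℝ) : ℝ → ℂ := fun x => Complex.exp (Complex.I * μ * x)

/-- The Smirnov class `N⁺` of the upper half-plane, as boundary functions:
quotients `g/h` with `g, h ∈ H∞⁺` and `h` outer. -/
def SmirnovP (f : ℝ → ℂ) : Prop :=
  ∃ g ∈ HinfP, ∃ h : ℝ → ℂ, IsOuter h ∧ ∀ᵐ x : ℝ ∂volume, f x * h x = g x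

/-- Map a function to its class in `L²(ℝ)` (zero if it is not in `L²`). -/
def toL2 (f : ℝ → ℂ) : Lp ℂ 2 (volume : Measure ℝ) :=
  if hf : MemLp f 2 (volume : Measure ℝ) then hf.toLp f else 0

/-- Map a pair of functions to the corresponding pair of `L²` classes. -/
def Qmap (φ : Fin 2 → ℝ → ℂ) : Fin 2 → Lp ℂ 2 (volume : Measure ℝ) :=
  fun i => toL2 (φ i)

end

lemma H2m_congr_ae {f g : ℝ → ℂ} (hf : f ∈ H2m) (hfg : f =ᵐ[volume] g) : g ∈ H2m := by
  obtain ⟨hL2, F, hF, hbound, hlim⟩ := hf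
  refine ⟨(memLp_congr_ae hfg).mp hL2, F, hF, hbound, ?_⟩
  filter_upwards [hlim, hfg] with x hx hfgx
  rwa [← hfgx]

lemma neg_mem_H2p {f : ℝ → ℂ} (hf : f ∈ H2p) : -f ∈ H2p := by
  obtain ⟨hL2, F, hF, ⟨C, hC⟩, hlim⟩ := hf
  refine ⟨hL2.neg, -F, hF.neg, ⟨C, fun y hy => ?_⟩, ?_⟩
  · simpa using hC y hy
  · filter_upwards [hlim] with x hx using hx.neg

lemma conj_mul_self_ae_eq_one {θ : ℝ → ℂ} (hθ : ∀ᵐ x ∂volume, ‖θ x‖ = 1) :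
    ∀ᵐ x ∂volume, starRingEnd ℂ (θ x) * θ x = 1 := by
  filter_upwards [hθ] with x hx
  rw [Complex.conj_mul', hx]
  norm_num

lemma mem_Kmodel_iff_of_norm_eq_one {θ f : ℝ → ℂ} (hθ : ∀ᵐ x ∂volume, ‖θ x‖ = 1) :
    f ∈ Kmodel θ ↔ f ∈ H2p ∧ (fun x => starRingEnd ℂ (θ x) * f x) ∈ H2m := by
  refine and_congr_right fun _ => ⟨?_, fun hg => ⟨_, hg, ?_⟩⟩
  · rintro ⟨g, hg, hfg⟩
    refine H2m_congr_ae hg ?_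
    filter_upwards [conj_mul_self_ae_eq_one hθ, hfg] with x hθx hfgx
    rw [hfgx, ← mul_assoc, hθx, one_mul]
  · filter_upwards [conj_mul_self_ae_eq_one hθ] with x hθx
    rw [← mul_assoc, mul_comm (θ x), hθx, one_mul]

lemma mem_kerTTO_iff {h θ φ : ℝ → ℂ} :
    φ ∈ kerTTO h θ ↔ φ ∈ Kmodel θ ∧ ∃ ψ ∈ H2p, (fun x => h x * φ x + θ x * ψ x) ∈ H2m := by
  refine and_congr_right fun _ => ⟨?_, ?_⟩
  · rintro ⟨u, hu, v, hv, hφ⟩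
    refine ⟨-u, neg_mem_H2p hu, H2m_congr_ae hv ?_⟩
    filter_upwards [hφ] with x hx
    simp only [hx, Pi.neg_apply]
    ring
  · rintro ⟨ψ, hψ, hv⟩
    refine ⟨-ψ, neg_mem_H2p hψ, _, hv, ae_of_all _ fun x => ?_⟩
    simp only [Pi.neg_apply]
    ring

lemma pair_mem_kerT2_iff {a b c d φ₁ φ₂ : ℝ → ℂ} :
    ![φ₁, φ₂] ∈ kerT2 !![a, b; c, d] ↔ (φ₁ ∈ H2p ∧ φ₂ ∈ H2p) ∧
      (fun x => a x * φ₁ x + b x * φ₂ x) ∈ H2m ∧ (fun x => c x * φ₁ x + d x * φ₂ x) ∈ H2m := by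
  simp [kerT2, Fin.forall_fin_two, Fin.sum_univ_two]

theorem mem_kerTTO_iff_exists_mem_kerT2_general
    (θ h : ℝ → ℂ) (hθ : IsInner θ)
    (φ₁ : ℝ → ℂ) :
    φ₁ ∈ kerTTO h θ ↔ ∃ φ₂ ∈ H2p,
      ![φ₁, φ₂] ∈ kerT2 !![fun x => starRingEnd ℂ (θ x), (0 : ℝ → ℂ); h, θ] := by
  simp only [mem_kerTTO_iff, mem_Kmodel_iff_of_norm_eq_one hθ.2, pair_mem_kerT2_iff,
    Pi.zero_apply, zero_mul, add_zero]
  constructor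
  · rintro ⟨⟨hφ₁, hrow₀⟩, φ₂, hφ₂, hrow₁⟩
    exact ⟨φ₂, hφ₂, ⟨hφ₁, hφ₂⟩, hrow₀, hrow₁⟩
  · rintro ⟨φ₂, -, ⟨hφ₁, hφ₂⟩, hrow₀, hrow₁⟩
    exact ⟨⟨hφ₁, hrow₀⟩, φ₂, hφ₂, hrow₁⟩

/-- For `θ` inner, `h ∈ L∞` and `G = [[conj θ, 0], [h, θ]]`, a function `φ₁₊ ∈ H₂⁺`
lies in `ker A_h^θ` if and only if there is `φ₂₊ ∈ H₂⁺` with `(φ₁₊, φ₂₊) ∈ ker T_G`. -/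
theorem mem_kerTTO_iff_exists_mem_kerT2
    (θ h : ℝ → ℂ) (hθ : IsInner θ) (hh : MemLp h ⊤ (volume : Measure ℝ))
    (φ₁ : ℝ → ℂ) (hφ₁ : φ₁ ∈ H2p) :
    φ₁ ∈ kerTTO h θ ↔ ∃ φ₂ ∈ H2p,
      ![φ₁, φ₂] ∈ kerT2 !![fun x => starRingEnd ℂ (θ x), (0 : ℝ → ℂ); h, θ] :=
  mem_kerTTO_iff_exists_mem_kerT2_general θ h hθ φ₁
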